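/- Let I be a nonempty finite index set. For each i ∈ I let S_i be a nonempty finite set, A_i a nonempty finite set, P_i : S_i → A_i → S_i → ℝ a transition kernel with ∑_{s' ∈ S_i} P_i(s,a)(s') = 1 for all s, a, r_i : S_i → A_i → ℝ a reward function, and w_i ≥ 0 a weight; let γ ∈ ℝ. Define asset-level finite-horizon optimal values by V_i^0(s) = 0 and V_i^{k+1}(s) = max_{a ∈ A_i} [ r_i(s,a) + γ ∑_{s' ∈ S_i} P_i(s,a)(s') V_i^k(s') ]. Define network-level finite-horizon optimal values on the product state space ∏_i S_i with joint action space ∏_i A_i, product transition kernel P(s,a)(s') = ∏_i P_i(s_i,a_i)(s'_i), and additive reward R(s,a) = ∑_i w_i r_i(s_i,a_i), by V^0(s) = 0 and V^{k+1}(s) = max_{a ∈ ∏_i A_i} [ R(s,a) + γ ∑_{s' ∈ ∏_i S_i} P(s,a)(s') V^k(s') ]. Then for every horizon k ≥ 0 and every joint state s ∈ ∏_i S_i, V^k(s) = ∑_{i∈I} w_i V_i^k(s_i). -/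
import Mathlib

open Finset

lemma sup'_pi_sum
    (I : Type*) [Fintype I] [DecidableEq I] [Nonempty I]
    (A : I → Type*) [∀ i, Fintype (A i)] [∀ i, Nonempty (A i)]
    (g : ∀ i, A i → ℝ) :
    (Finset.univ : Finset (∀ i, A i)).sup' Finset.univ_nonempty
      (fun a => ∑ i, g i (a i))
      = ∑ i, (Finset.univ : Finset (A i)).sup' Finset.univ_nonempty (g i) := by
  apply le_antisymm
  · apply Finset.sup'_le
    intro a _
    exact Finset.sum_le_sum fun i _ => Finset.le_sup' _ (Finset.mem_univ _)
  · choose b hb hb2 using fun i =>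
      Finset.exists_mem_eq_sup' (Finset.univ_nonempty : (Finset.univ : Finset (A i)).Nonempty) (g i)
    calc ∑ i, (Finset.univ : Finset (A i)).sup' Finset.univ_nonempty (g i)
        = ∑ i, g i (b i) := by exact Finset.sum_congr rfl fun i _ => hb2 i
      _ ≤ _ := Finset.le_sup' (fun a => ∑ i, g i (a i)) (Finset.mem_univ b)

lemma fubini_pi
    (I : Type*) [Fintype I] [DecidableEq I]
    (S : I → Type*) [∀ i, Fintype (S i)]
    (p : ∀ i, S i → ℝ)
    (hp : ∀ i, ∑ x : S i, p i x = 1)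
    (j : I) (v : S j → ℝ) :
    ∑ s' : ∀ i, S i, (∏ i, p i (s' i)) * v (s' j) = ∑ x : S j, p j x * v x := by
  set g : ∀ i, S i → ℝ := Function.update p j (fun x => p j x * v x) with hg
  have key : ∀ s' : ∀ i, S i, (∏ i, p i (s' i)) * v (s' j) = ∏ i, g i (s' i) := by
    intro s'
    rw [← Finset.mul_prod_erase Finset.univ (fun i => p i (s' i)) (Finset.mem_univ j),
        ← Finset.mul_prod_erase Finset.univ (fun i => g i (s' i)) (Finset.mem_univ j)]
    have h1 : g j (s' j) = p j (s' j) * v (s' j) := by simp [hg]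
    have h2 : ∀ i ∈ Finset.univ.erase j, g i (s' i) = p i (s' i) := by
      intro i hi
      simp [hg, Function.update_of_ne (Finset.ne_of_mem_erase hi)]
    rw [Finset.prod_congr rfl h2, h1]
    ring
  rw [Finset.sum_congr rfl fun s' _ => key s', ← Fintype.prod_sum g,
      ← Finset.mul_prod_erase Finset.univ (fun i => ∑ x : S i, g i x) (Finset.mem_univ j)]
  have h2 : ∀ i ∈ Finset.univ.erase j, ∑ x : S i, g i x = 1 := by
    intro i hi
    rw [show g i = p i from Function.update_of_ne (Finset.ne_of_mem_erase hi) _ _]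
    exact hp i
  rw [Finset.prod_congr rfl h2]
  simp [hg]

theorem stmt6
    (I : Type*) [Fintype I] [DecidableEq I] [Nonempty I]
    (S : I → Type*) [∀ i, Fintype (S i)] [∀ i, Nonempty (S i)]
    (A : I → Type*) [∀ i, Fintype (A i)] [∀ i, Nonempty (A i)]
    (P : ∀ i, S i → A i → S i → ℝ)
    (hP : ∀ i s a, ∑ s' : S i, P i s a s' = 1)
    (r : ∀ i, S i → A i → ℝ)
    (w : I → ℝ) (hw : ∀ i, 0 ≤ w i)
    (γ : ℝ)
    (V : ∀ i, ℕ → S i → ℝ)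
    (hV0 : ∀ i s, V i 0 s = 0)
    (hVsucc : ∀ i k s,
      V i (k + 1) s =
        (Finset.univ : Finset (A i)).sup' Finset.univ_nonempty
          (fun a => r i s a + γ * ∑ s' : S i, P i s a s' * V i k s'))
    (W : ℕ → (∀ i, S i) → ℝ)
    (hW0 : ∀ s, W 0 s = 0)
    (hWsucc : ∀ k (s : ∀ i, S i),
      W (k + 1) s =
        (Finset.univ : Finset (∀ i, A i)).sup' Finset.univ_nonempty
          (fun a => (∑ i, w i * r i (s i) (a i))
            + γ * ∑ s' : ∀ i, S i, (∏ i, P i (s i) (a i) (s' i)) * W k s')) :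
    ∀ k (s : ∀ i, S i), W k s = ∑ i, w i * V i k (s i) := by
  intro k
  induction k with
  | zero => intro s; simp [hW0, hV0]
  | succ k ih =>
    intro s
    rw [hWsucc]
    have hinner : ∀ a : ∀ i, A i,
        (∑ i, w i * r i (s i) (a i))
          + γ * ∑ s' : ∀ i, S i, (∏ i, P i (s i) (a i) (s' i)) * W k s'
        = ∑ i, w i * (r i (s i) (a i)
            + γ * ∑ s' : S i, P i (s i) (a i) s' * V i k s') := by
      intro a
      have h1 : ∀ s' : ∀ i, S i,
          (∏ i, P i (s i) (a i) (s' i)) * W k s'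
          = ∑ j, w j * ((∏ i, P i (s i) (a i) (s' i)) * V j k (s' j)) := by
        intro s'
        rw [ih s', Finset.mul_sum]
        exact Finset.sum_congr rfl fun j _ => by ring
      rw [Finset.sum_congr rfl fun s' _ => h1 s', Finset.sum_comm]
      have h2 : ∀ j : I,
          ∑ s' : ∀ i, S i, w j * ((∏ i, P i (s i) (a i) (s' i)) * V j k (s' j))
          = w j * ∑ x : S j, P j (s j) (a j) x * V j k x := by
        intro j
        rw [← Finset.mul_sum,
          fubini_pi I S (fun i => P i (s i) (a i)) (fun i => hP i (s i) (a i)) j (V j k)]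
      rw [Finset.sum_congr rfl fun j _ => h2 j, Finset.mul_sum, ← Finset.sum_add_distrib]
      exact Finset.sum_congr rfl fun i _ => by ring
    rw [show (fun a : ∀ i, A i => (∑ i, w i * r i (s i) (a i))
          + γ * ∑ s' : ∀ i, S i, (∏ i, P i (s i) (a i) (s' i)) * W k s')
        = fun a => ∑ i, w i * (r i (s i) (a i)
            + γ * ∑ s' : S i, P i (s i) (a i) s' * V i k s') from funext hinner]
    rw [sup'_pi_sum I A (fun i ai => w i * (r i (s i) ai
            + γ * ∑ s' : S i, P i (s i) ai s' * V i k s'))]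
    refine Finset.sum_congr rfl fun i _ => ?_
    rw [hVsucc]
    exact (Finset.comp_sup'_eq_sup'_comp Finset.univ_nonempty (fun x => w i * x)
      (fun x y => mul_max_of_nonneg x y (hw i))).symm
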